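/- Given any fixed customer sequence $\pi$, the appointment times defined by $A_1 := 0$ and $A_i := \left( \max_{1 \le l \le i-1}\left( A_l + \sum_{k=l}^{i-1} \sum_j \pi_{kj}\bar{p}_j \right) - \sum_j \pi_{ij} W_j \right)^+$ for $i \ge 2$ satisfy all robust waiting-time guarantees: for every service-time scenario $p \in \prod_j [\ubar{p}_j, \bar{p}_j]$ and every no-show scenario $\lambda$, the waiting time of appointment $i$, namely $(C_{i-1}(\pi,A,p,\lambda) - A_i)^+$ when the assigned customer shows up, does not exceed $\sum_j \pi_{ij} W_j$. Hence the Robust Appointment Scheduling Problem with Waiting Time Guarantees is always feasible. -/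

import Mathlib

/-!
Since `A 1 ≥ 0 = C 0`, the completion-time recursion unrolls to
`C m = max_{1 ≤ l ≤ m} (A l + ∑_{k=l}^m s k)`. Completion times are monotone in the service
durations and every realised duration `λ p` is at most `p̄`, so `C (i - 1)` is at most its
worst-case value `max_l (A l + ∑_{k=l}^{i-1} p̄ k)`, which is at most `A i + W i` by the choice
of `A i`.
-/

open Finset

/-- Completion times from appointment times `A` and service durations `sv`. -/
noncomputable def ctimes6 (A sv : ℕ → ℝ) : ℕ → ℝ
  | 0 => 0
  | i + 1 => max (A (i + 1)) (ctimes6 A sv i) + sv (i + 1)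

theorem ctimes6_mono {A sv sv' : ℕ → ℝ} (h : ∀ k, sv k ≤ sv' k) (m : ℕ) :
    ctimes6 A sv m ≤ ctimes6 A sv' m := by
  induction m with
  | zero => rfl
  | succ m ih => simp only [ctimes6]; gcongr; exact h _

theorem ctimes6_eq_sup' {A : ℕ → ℝ} (sv : ℕ → ℝ) (hA : 0 ≤ A 1) {m : ℕ} (hm : 1 ≤ m) :
    ctimes6 A sv m =
      (Icc 1 m).sup' (nonempty_Icc.mpr hm) fun l => A l + ∑ k ∈ Icc l m, sv k := by
  induction m, hm using Nat.le_induction with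
  | base => simp [ctimes6, hA]
  | succ m hm ih =>
    have hIcc : insert (m + 1) (Icc 1 m) = Icc 1 (m + 1) :=
      insert_Icc_right_eq_Icc_add_one (by omega)
    calc ctimes6 A sv (m + 1)
        = max (A (m + 1)) ((Icc 1 m).sup' (nonempty_Icc.mpr hm)
            fun l => A l + ∑ k ∈ Icc l m, sv k) + sv (m + 1) := by rw [ctimes6, ih]
      _ = (A (m + 1) + sv (m + 1)) ⊔ (Icc 1 m).sup' (nonempty_Icc.mpr hm)
            fun l => A l + (∑ k ∈ Icc l m, sv k + sv (m + 1)) := by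
        rw [← max_add_add_right, sup'_add]
        simp only [add_assoc]
      _ = (insert (m + 1) (Icc 1 m)).sup' (insert_nonempty _ _)
            fun l => A l + ∑ k ∈ Icc l (m + 1), sv k := by
        rw [sup'_insert, Icc_self, sum_singleton]
        congr 1
        exact sup'_congr _ rfl fun l hl => by rw [sum_Icc_succ_top (by grind)]
      _ = _ := by simp only [hIcc]

/-- feasibility: the appointment times `A 1 = 0`,
`A i = (max_{l<i}(A l + ∑_{k=l}^{i-1} p̄_{asg k}) - W_{asg i})⁺` satisfy every robust
waiting-time guarantee: for every service-time scenario in the box and every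
no-show scenario, the waiting time of appointment `i` is at most `W (asg i)`. -/
theorem asap_times_satisfy_waiting_time_guarantees
    (n : ℕ) (asg : ℕ → ℕ) (lo hi W : ℕ → ℝ)
    (hlo : ∀ j, 0 ≤ lo j) (hlohi : ∀ j, lo j ≤ hi j) (hW : ∀ j, 0 ≤ W j)
    (A : ℕ → ℝ) (hA1 : A 1 = 0)
    (hAdef : ∀ i, ∀ h2 : 2 ≤ i, i ≤ n →
      A i = max (((Finset.Icc 1 (i - 1)).sup' (Finset.nonempty_Icc.mpr (by omega))
        (fun l => A l + ∑ k ∈ Finset.Icc l (i - 1), hi (asg k))) - W (asg i)) 0) :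
    ∀ p : ℕ → ℝ, (∀ j, p j ∈ Set.Icc (lo j) (hi j)) →
    ∀ lam : ℕ → ℝ, (∀ j, lam j = 0 ∨ lam j = 1) →
    ∀ i, 1 ≤ i → i ≤ n →
      max (ctimes6 A (fun k => lam (asg k) * p (asg k)) (i - 1) - A i) 0 ≤ W (asg i) := by
  intro p hp lam hlam i hi1 hin
  have hdur : ∀ k, lam (asg k) * p (asg k) ≤ hi (asg k) := fun k => by
    rcases hlam (asg k) with h | h <;> simp only [h, zero_mul, one_mul]
    · exact (hlo _).trans (hlohi _)
    · exact (hp _).2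
  refine max_le ?_ (hW _)
  obtain rfl | h2 : i = 1 ∨ 2 ≤ i := by omega
  · simp [ctimes6, hA1, hW]
  have hAi : (Icc 1 (i - 1)).sup' (nonempty_Icc.mpr (by omega))
      (fun l => A l + ∑ k ∈ Icc l (i - 1), hi (asg k)) - W (asg i) ≤ A i := by
    rw [hAdef i h2 hin]
    exact le_max_left _ _
  calc ctimes6 A (fun k => lam (asg k) * p (asg k)) (i - 1) - A i
      ≤ ctimes6 A (fun k => hi (asg k)) (i - 1) - A i := by gcongr; exact ctimes6_mono hdur _
    _ ≤ W (asg i) := by rw [ctimes6_eq_sup' _ hA1.ge (by omega)]; linarith
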